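/- If 0 < ℓ < W((2+√3)/2), then the tube radius satisfies cosh(r₀(ℓ)) > √3 + 1. -/

import Mathlib

/-- Inverse hyperbolic cosine: `arcosh y = log (y + √(y² - 1))` for `y ≥ 1`. -/
noncomputable def arcosh (y : ℝ) : ℝ := Real.log (y + Real.sqrt (y ^ 2 - 1))

/-- The function `W` from the paper. -/
noncomputable def W (x : ℝ) : ℝ :=
  (Real.sqrt 3 / (4 * Real.pi)) *
    (arcosh (1 + 1 / (1 + Real.sqrt (1 + (8 * x ^ 2 - 8 * x + 1) ^ 2)))) ^ 2

/-- The function `κ(ℓ) = cosh(√(4πℓ/√3)) - 1`. -/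
noncomputable def κ (ℓ : ℝ) : ℝ :=
  Real.cosh (Real.sqrt (4 * Real.pi * ℓ / Real.sqrt 3)) - 1

/-- The tube radius `r₀(ℓ)`, the positive real with
`cosh²(r₀(ℓ)) = (1/2)(√(1 - 2κ(ℓ))/κ(ℓ) + 1)`. -/
noncomputable def r₀ (ℓ : ℝ) : ℝ :=
  arcosh (Real.sqrt ((1 / 2) * (Real.sqrt (1 - 2 * κ ℓ) / κ ℓ + 1)))

/-!
With `p = 8x² - 8x + 1`, the function `W` is built so that `κ(W(x)) = 1 / (1 + √(1 + p²))`,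
and at that value `√(1 - 2κ)/κ = p`. As `κ` increases in `ℓ` and `√(1 - 2κ)/κ` decreases
in `κ`, every `0 < ℓ < W(x)` gives `cosh² r > (p + 1)/2 = (2x - 1)²`.
For `x = (2 + √3)/2` this is `cosh r > √3 + 1`.
-/

open Real (cosh pi)

lemma κ_pos {ℓ : ℝ} (hℓ : 0 < ℓ) : 0 < κ ℓ := by
  rw [κ, sub_pos, Real.one_lt_cosh]
  positivity

lemma κ_lt_cosh_sub_one {ℓ a : ℝ} (hℓ : 0 ≤ ℓ) (ha : 0 ≤ a)
    (h : ℓ < √3 / (4 * pi) * a ^ 2) : κ ℓ < cosh a - 1 := by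
  have h' : 4 * pi * ℓ / √3 < a ^ 2 := by
    rw [div_lt_iff₀ (by positivity)]
    rw [div_mul_eq_mul_div, lt_div_iff₀ (by positivity)] at h
    linarith
  have hsqrt : √(4 * pi * ℓ / √3) < a := by
    simpa only [Real.sqrt_sq ha] using Real.sqrt_lt_sqrt (by positivity) h'
  rw [κ, sub_lt_sub_iff_right, Real.cosh_lt_cosh, abs_of_nonneg (Real.sqrt_nonneg _),
    abs_of_nonneg ha]
  exact hsqrt

lemma κ_lt_of_lt_W {ℓ x : ℝ} (hℓ : 0 ≤ ℓ) (h : ℓ < W x) :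
    κ ℓ < 1 / (1 + √(1 + (8 * x ^ 2 - 8 * x + 1) ^ 2)) := by
  have hy : 1 ≤ 1 + 1 / (1 + √(1 + (8 * x ^ 2 - 8 * x + 1) ^ 2)) :=
    le_add_of_nonneg_right (by positivity)
  -- the `arcosh` of the definitions unfolds to Mathlib's `Real.arcosh`
  simpa only [Real.cosh_arcosh hy, add_sub_cancel_left] using
    κ_lt_cosh_sub_one hℓ (Real.arcosh_nonneg hy) h

lemma lt_sqrt_one_sub_two_mul_div {m c : ℝ} (hc : 0 < c) (h : c < 1 / (1 + √(1 + m ^ 2))) :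
    m < √(1 - 2 * c) / c := by
  set S := √(1 + m ^ 2)
  have hS : S ^ 2 = 1 + m ^ 2 := Real.sq_sqrt (by positivity)
  have hS1 : 1 ≤ S := Real.one_le_sqrt.mpr (by nlinarith)
  have hcS : (1 + S) * c < 1 := by rwa [lt_div_iff₀' (by positivity)] at h
  have hprod : ((1 + S) * c - 1) * ((S - 1) * c + 1) < 0 :=
    mul_neg_of_neg_of_pos (sub_neg.mpr hcS) (by nlinarith)
  have hsq : (m * c) ^ 2 < 1 - 2 * c := by
    calc (m * c) ^ 2 = ((1 + S) * c - 1) * ((S - 1) * c + 1) + (1 - 2 * c) := by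
          linear_combination (-c ^ 2) * hS
      _ < 1 - 2 * c := by linarith
  rw [lt_div_iff₀ hc]
  exact Real.lt_sqrt_of_sq_lt hsq

theorem two_mul_sub_one_lt_cosh_of_lt_W {ℓ x r : ℝ} (hℓ : 0 < ℓ) (h : ℓ < W x)
    (hcosh : cosh r ^ 2 = 1 / 2 * (√(1 - 2 * κ ℓ) / κ ℓ + 1)) :
    2 * x - 1 < cosh r := by
  have hp := lt_sqrt_one_sub_two_mul_div (κ_pos hℓ) (κ_lt_of_lt_W hℓ.le h)
  have hsq : (2 * x - 1) ^ 2 < cosh r ^ 2 := by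
    rw [hcosh]
    linarith
  exact lt_of_pow_lt_pow_left₀ 2 (Real.cosh_pos r).le hsq

theorem cosh_tube_radius_gt_general (ℓ : ℝ) (h0 : 0 < ℓ)
    (h1 : ℓ < W ((2 + Real.sqrt 3) / 2)) (r : ℝ)
    (hcosh : (Real.cosh r) ^ 2 = (1 / 2) * (Real.sqrt (1 - 2 * κ ℓ) / κ ℓ + 1)) :
    Real.cosh r > Real.sqrt 3 + 1 := by
  have := two_mul_sub_one_lt_cosh_of_lt_W h0 h1 hcosh
  linarith

theorem cosh_tube_radius_gt (ℓ : ℝ) (h0 : 0 < ℓ)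
    (h1 : ℓ < W ((2 + Real.sqrt 3) / 2)) (r : ℝ) (hr : 0 < r)
    (hcosh : (Real.cosh r) ^ 2 = (1 / 2) * (Real.sqrt (1 - 2 * κ ℓ) / κ ℓ + 1)) :
    Real.cosh r > Real.sqrt 3 + 1 :=
  cosh_tube_radius_gt_general ℓ h0 h1 r hcosh
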